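/- Let A be an f-shallow cutting for a finite set S ⊆ R^d and let B be an f'-shallow cutting for a set S' ⊆ S with f' ≥ 2f. Then every cell of A is contained in some cell of B. -/
import Mathlib

/-- The cell with apex `a`: all points of `ℝ^d` dominated by `a` (coordinatewise `≤ a`). -/
def cell {d : ℕ} (a : Fin d → ℝ) : Set (Fin d → ℝ) := {p | p ≤ a}

/-- The level of `q` in `S`: the number of points of `S` dominated by `q`. -/
noncomputable def level {d : ℕ} (S : Set (Fin d → ℝ)) (q : Fin d → ℝ) : ℕ :=
  {p ∈ S | p ≤ q}.ncard

/-- A `t`-shallow cutting of `S`, given by the finite set `A` of apex points of its cells: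
(i) every point of level at most `t` in `S` lies in some cell, and
(ii) every point lying in some cell has level at most `2t` in `S`. -/
def IsShallowCutting {d : ℕ} (t : ℕ) (S : Set (Fin d → ℝ)) (A : Finset (Fin d → ℝ)) : Prop :=
  (∀ q, level S q ≤ t → ∃ a ∈ A, q ∈ cell a) ∧
  (∀ a ∈ A, ∀ q ∈ cell a, level S q ≤ 2 * t)

/-- If `A` is an `f`-shallow cutting of `S` and `B` an `f'`-shallow cutting of
`S' ⊆ S` with `f' ≥ 2f`, then every cell of `A` is contained in some cell of `B`. -/
theorem cell_subset_of_shallowCuttings {d f f' : ℕ} (S S' : Set (Fin d → ℝ))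
    (hS : S.Finite) (hsub : S' ⊆ S) (A B : Finset (Fin d → ℝ))
    (hA : IsShallowCutting f S A) (hB : IsShallowCutting f' S' B)
    (hf : 2 * f ≤ f') :
    ∀ a ∈ A, ∃ b ∈ B, cell a ⊆ cell b := by
  intro a ha
  have haa : a ∈ cell a := le_refl a
  have h1 : level S a ≤ 2 * f := hA.2 a ha a haa
  have hmono : level S' a ≤ level S a := by
    apply Set.ncard_le_ncard
    · intro p hp; exact ⟨hsub hp.1, hp.2⟩
    · exact hS.subset (fun p hp => hp.1)
  obtain ⟨b, hb, hab⟩ := hB.1 a (le_trans hmono (le_trans h1 hf))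
  exact ⟨b, hb, fun p hp => show p ≤ b from le_trans hp hab⟩
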